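/- Let n ≥ 3 be an integer and let k ≥ 1 be odd. In the quotient ring R_{n,k} = ℤ[X_1,…,X_n]/(X_1^{k+1},…,X_n^{k+1}), with A_i the image of X_i, one has [(∏_{i=2}^{n} (A_1 − A_i)) · (A_2 − A_3)]^k = 0. -/

import Mathlib

/-!
The product contains the factors `(A₁ - A₂)(A₁ - A₃)`, so the element is a multiple of `V ^ k`
with `V = (X₁ - X₂)(X₁ - X₃)(X₂ - X₃)`, and it suffices to see that `V ^ k` lies in the ideal;
by renaming variables we may assume there are only three of them. `V ^ k` is homogeneous of
degree `3k`, so every monomial in it other than `x₁ᵏ x₂ᵏ x₃ᵏ` has an exponent exceeding `k`. As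
`k` is odd, swapping `X₁` and `X₂` negates `V ^ k` and fixes `x₁ᵏ x₂ᵏ x₃ᵏ`, so the coefficient
`c` of that monomial satisfies `c = -c`, i.e. `c = 0`.
-/

open MvPolynomial Finset

namespace MvPolynomial

noncomputable def truncationIdeal (σ R : Type*) [CommSemiring R] (k : ℕ) : Ideal (MvPolynomial σ R) :=
  Ideal.span (Set.range fun i : σ => (X i : MvPolynomial σ R) ^ (k + 1))

variable {σ τ R : Type*}

section CommSemiring

variable [CommSemiring R]

theorem mem_truncationIdeal_iff {k : ℕ} {p : MvPolynomial σ R} :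
    p ∈ truncationIdeal σ R k ↔ ∀ m ∈ p.support, ∃ i, k < m i := by
  have hgen : Set.range (fun i : σ => (X i : MvPolynomial σ R) ^ (k + 1)) =
      (fun s => monomial s (1 : R)) '' Set.range fun i => Finsupp.single i (k + 1) := by
    rw [← Set.range_comp]
    simp [Function.comp_def, X_pow_eq_monomial]
  rw [truncationIdeal, hgen, mem_ideal_span_monomial_image]
  simp only [Set.exists_range_iff, Finsupp.single_le_iff, Nat.add_one_le_iff]

theorem rename_mem_truncationIdeal (f : σ → τ) {k : ℕ} {p : MvPolynomial σ R}
    (hp : p ∈ truncationIdeal σ R k) : rename f p ∈ truncationIdeal τ R k := by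
  have hle : (truncationIdeal σ R k).map (rename f) ≤ truncationIdeal τ R k := by
    rw [truncationIdeal, Ideal.map_span, Ideal.span_le]
    rintro _ ⟨_, ⟨i, rfl⟩, rfl⟩
    exact Ideal.subset_span ⟨f i, by simp⟩
  exact hle (Ideal.mem_map_of_mem _ hp)

theorem mem_truncationIdeal_of_isHomogeneous [Fintype σ] {k : ℕ} {p : MvPolynomial σ R}
    (hp : p.IsHomogeneous (Fintype.card σ * k))
    (hcoeff : coeff (Finsupp.equivFunOnFinite.symm fun _ => k) p = 0) :
    p ∈ truncationIdeal σ R k := by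
  rw [mem_truncationIdeal_iff]
  intro m hm
  by_contra! hle
  have hdeg : ∑ i, m i = ∑ _i : σ, k := by
    rw [sum_const, card_univ, smul_eq_mul, ← Finsupp.degree_eq_sum, Finsupp.degree_eq_weight_one]
    exact hp (mem_support_iff.mp hm)
  have hm_const : m = Finsupp.equivFunOnFinite.symm fun _ => k := by
    ext i
    exact (sum_eq_sum_iff_of_le fun i _ => hle i).1 hdeg i (mem_univ i)
  exact mem_support_iff.mp hm (hm_const ▸ hcoeff)

end CommSemiring

section CommRing

variable [CommRing R] [IsAddTorsionFree R]

theorem coeff_eq_zero_of_rename_eq_neg {e : σ ≃ σ} {p : MvPolynomial σ R}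
    (hp : rename e p = -p) {m : σ →₀ ℕ} (hm : m.mapDomain e = m) : coeff m p = 0 := by
  have h := coeff_rename_mapDomain e e.injective p m
  rw [hm, hp, coeff_neg] at h
  exact neg_eq_self.mp h

theorem sub_mul_sub_mul_sub_pow_mem_truncationIdeal_fin_three {k : ℕ} (hk : Odd k) :
    ((X 0 - X 1) * (X 0 - X 2) * (X 1 - X 2) : MvPolynomial (Fin 3) R) ^ k ∈
      truncationIdeal (Fin 3) R k := by
  set V : MvPolynomial (Fin 3) R := (X 0 - X 1) * (X 0 - X 2) * (X 1 - X 2)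
  have hV : V.IsHomogeneous 3 :=
    (((isHomogeneous_X _ _).sub (isHomogeneous_X _ _)).mul
      ((isHomogeneous_X _ _).sub (isHomogeneous_X _ _))).mul
      ((isHomogeneous_X _ _).sub (isHomogeneous_X _ _))
  have hswap : rename (Equiv.swap 0 1) V = -V := by
    simp only [V, map_mul, map_sub, rename_X, Equiv.swap_apply_left, Equiv.swap_apply_right, ne_eq,
      Fin.reduceEq, not_false_eq_true, Equiv.swap_apply_of_ne_of_ne]
    ring
  refine mem_truncationIdeal_of_isHomogeneous (by simpa using hV.pow k) ?_
  refine coeff_eq_zero_of_rename_eq_neg (e := Equiv.swap 0 1) (by rw [map_pow, hswap, hk.neg_pow]) ?_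
  ext i
  simp [Finsupp.mapDomain_equiv_apply]

theorem sub_mul_sub_mul_sub_pow_mem_truncationIdeal {k : ℕ} (hk : Odd k) (a b c : σ) :
    ((X a - X b) * (X a - X c) * (X b - X c) : MvPolynomial σ R) ^ k ∈ truncationIdeal σ R k := by
  simpa using rename_mem_truncationIdeal ![a, b, c]
    (sub_mul_sub_mul_sub_pow_mem_truncationIdeal_fin_three (R := R) hk)

end CommRing

end MvPolynomial

/-- For `n ≥ 3` and odd `k ≥ 1`, in `ℤ[X_1,…,X_n]/(X_1^{k+1},…,X_n^{k+1})`
(indices `0,…,n-1` here), one has `[(∏_{i=2}^{n} (A_1 − A_i)) · (A_2 − A_3)]^k = 0`. -/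
theorem xi_odd_eq_zero (n k : ℕ) (hn : 3 ≤ n) (hodd : Odd k)
    (I : Ideal (MvPolynomial (Fin n) ℤ))
    (hI : I = Ideal.span (Set.range fun i : Fin n => (X i : MvPolynomial (Fin n) ℤ) ^ (k + 1)))
    (A : Fin n → MvPolynomial (Fin n) ℤ ⧸ I)
    (hA : ∀ i, A i = Ideal.Quotient.mk I (X i)) :
    ((∏ i ∈ univ.erase ⟨0, by omega⟩, (A ⟨0, by omega⟩ - A i)) *
        (A ⟨1, by omega⟩ - A ⟨2, by omega⟩)) ^ k = 0 := by
  set a : Fin n := ⟨0, by omega⟩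
  set b : Fin n := ⟨1, by omega⟩
  set c : Fin n := ⟨2, by omega⟩
  have hbc : b ≠ c := by simp [b, c, Fin.ext_iff]
  have hsub : {b, c} ⊆ univ.erase a := by simp [insert_subset_iff, a, b, c, Fin.ext_iff]
  have hdvd : (X a - X b) * (X a - X c) * (X b - X c) ∣
      (∏ i ∈ univ.erase a, (X a - X i)) * (X b - X c : MvPolynomial (Fin n) ℤ) := by
    refine mul_dvd_mul_right ?_ _
    simpa [prod_pair hbc] using prod_dvd_prod_of_subset _ _ (fun i => X a - X i) hsub
  simp only [hA, ← map_sub, ← map_prod, ← map_mul, ← map_pow, Ideal.Quotient.eq_zero_iff_mem, hI]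
  exact Ideal.mem_of_dvd _ (pow_dvd_pow_of_dvd hdvd k)
    (sub_mul_sub_mul_sub_pow_mem_truncationIdeal hodd a b c)
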